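/- arXiv:1410.4439 — 3 statements merged into one kernel-verified Lean document; each statement's English description precedes it below -/
import Mathlib

section
/- If M is a partial monoid and Q is a (unital) quantale, then the function space Q^M of power series f : M → Q, with pointwise suprema, convolution (f·g)(x) = ⨆_{x = y·z} f(y)·g(z) as multiplication, and unit 𝟙 defined by 𝟙(x) = 1 if x = 1 and 0 otherwise, forms a quantale. -/
/-- A partial monoid: multiplication is partial, modelled via `Option`;
undefined products are `none` (the `⊥` of the paper). -/
class PartialMonoid (M : Type*) where
  pmul : M → M → Option M
  pone : M
  pone_mul : ∀ x : M, pmul pone x = some x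
  mul_pone : ∀ x : M, pmul x pone = some x
  passoc : ∀ x y z w : M,
    (∃ u, pmul x y = some u ∧ pmul u z = some w) ↔
    (∃ v, pmul y z = some v ∧ pmul x v = some w)

/-- A (unital) quantale: a complete lattice with a monoid structure whose
multiplication distributes over arbitrary suprema on both sides. -/
class UnitalQuantale (Q : Type*) extends CompleteLattice Q, Monoid Q where
  mul_sSup_distrib : ∀ (x : Q) (s : Set Q), x * sSup s = ⨆ y ∈ s, x * y
  sSup_mul_distrib : ∀ (s : Set Q) (x : Q), sSup s * x = ⨆ y ∈ s, y * x

open PartialMonoid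

/-- Convolution of power series: `(f·g) x = ⨆_{x = y·z} f y * g z`. -/
def conv {M Q : Type*} [PartialMonoid M] [UnitalQuantale Q] (f g : M → Q) : M → Q :=
  fun x => ⨆ (y : M) (z : M) (_ : pmul y z = some x), f y * g z

open Classical in
/-- The unit power series: `𝟙 x = 1` if `x = 1`, else `0` (= `⊥`). -/
noncomputable def convUnit (M Q : Type*) [PartialMonoid M] [UnitalQuantale Q] : M → Q :=
  fun x => if x = pone then 1 else ⊥

section helpers

variable {Q : Type*} [UnitalQuantale Q]

lemma q_mul_iSup {ι : Sort*} (x : Q) (f : ι → Q) : x * (⨆ i, f i) = ⨆ i, x * f i := by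
  rw [iSup, UnitalQuantale.mul_sSup_distrib, iSup_range]

lemma q_iSup_mul {ι : Sort*} (f : ι → Q) (x : Q) : (⨆ i, f i) * x = ⨆ i, f i * x := by
  rw [iSup, UnitalQuantale.sSup_mul_distrib, iSup_range]

lemma q_mul_bot (x : Q) : x * (⊥ : Q) = ⊥ := by
  have := UnitalQuantale.mul_sSup_distrib x (∅ : Set Q)
  simpa using this

lemma q_bot_mul (x : Q) : (⊥ : Q) * x = ⊥ := by
  have := UnitalQuantale.sSup_mul_distrib (∅ : Set Q) x
  simpa using this

lemma q_mul_le_mul_left {a b : Q} (x : Q) (h : a ≤ b) : x * a ≤ x * b := by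
  have hb : b = sSup {a, b} := by rw [sSup_pair, sup_eq_right.mpr h]
  rw [hb, UnitalQuantale.mul_sSup_distrib]
  exact le_iSup₂_of_le a (by simp) le_rfl

lemma q_mul_le_mul_right {a b : Q} (h : a ≤ b) (x : Q) : a * x ≤ b * x := by
  have hb : b = sSup {a, b} := by rw [sSup_pair, sup_eq_right.mpr h]
  rw [hb, UnitalQuantale.sSup_mul_distrib]
  exact le_iSup₂_of_le a (by simp) le_rfl

end helpers

/-- The power series `Q^M` over a partial monoid `M` with values in a quantale `Q`
form a quantale under pointwise suprema, convolution and the unit `𝟙`. -/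
theorem powerSeries_quantale (M Q : Type*) [PartialMonoid M] [UnitalQuantale Q] :
    (∀ f g h : M → Q, conv (conv f g) h = conv f (conv g h)) ∧
    (∀ f : M → Q, conv (convUnit M Q) f = f) ∧
    (∀ f : M → Q, conv f (convUnit M Q) = f) ∧
    (∀ (f : M → Q) (s : Set (M → Q)), conv f (sSup s) = ⨆ g ∈ s, conv f g) ∧
    (∀ (s : Set (M → Q)) (g : M → Q), conv (sSup s) g = ⨆ f ∈ s, conv f g) := by
  refine ⟨?_, ?_, ?_, ?_, ?_⟩
  · -- associativity
    intro f g h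
    funext x
    apply le_antisymm
    · simp only [conv]
      refine iSup_le fun u => iSup_le fun c => iSup_le fun huc => ?_
      rw [q_iSup_mul]
      refine iSup_le fun a => ?_
      rw [q_iSup_mul]
      refine iSup_le fun b => ?_
      rw [q_iSup_mul]
      refine iSup_le fun hab => ?_
      obtain ⟨v, hbc, hav⟩ := (passoc a b c x).mp ⟨u, hab, huc⟩
      calc f a * g b * h c = f a * (g b * h c) := mul_assoc _ _ _
        _ ≤ f a * ⨆ (y : M) (z : M) (_ : pmul y z = some v), g y * h z := by
            exact q_mul_le_mul_left _
              (le_iSup_of_le b (le_iSup_of_le c (le_iSup_of_le hbc le_rfl)))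
        _ ≤ _ := by
            apply le_iSup_of_le a; apply le_iSup_of_le v; apply le_iSup_of_le hav; exact le_rfl
    · simp only [conv]
      refine iSup_le fun a => iSup_le fun v => iSup_le fun hav => ?_
      rw [q_mul_iSup]
      refine iSup_le fun b => ?_
      rw [q_mul_iSup]
      refine iSup_le fun c => ?_
      rw [q_mul_iSup]
      refine iSup_le fun hbc => ?_
      obtain ⟨u, hab, huc⟩ := (passoc a b c x).mpr ⟨v, hbc, hav⟩
      calc f a * (g b * h c) = f a * g b * h c := (mul_assoc _ _ _).symm
        _ ≤ (⨆ (y : M) (z : M) (_ : pmul y z = some u), f y * g z) * h c := by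
            refine q_mul_le_mul_right ?_ _
            apply le_iSup_of_le a; apply le_iSup_of_le b; apply le_iSup_of_le hab; exact le_rfl
        _ ≤ _ := by
            apply le_iSup_of_le u; apply le_iSup_of_le c; apply le_iSup_of_le huc; exact le_rfl
  · -- left unit
    intro f
    funext x
    simp only [conv, convUnit]
    apply le_antisymm
    · refine iSup_le fun y => iSup_le fun z => iSup_le fun hyz => ?_
      by_cases hy : y = pone
      · subst hy
        rw [pone_mul] at hyz
        cases hyz
        simp
      · simp [if_neg hy, q_bot_mul]
    · exact le_iSup_of_le pone (le_iSup_of_le x (le_iSup_of_le (pone_mul x) (by simp)))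
  · -- right unit
    intro f
    funext x
    simp only [conv, convUnit]
    apply le_antisymm
    · refine iSup_le fun y => iSup_le fun z => iSup_le fun hyz => ?_
      by_cases hz : z = pone
      · subst hz
        rw [mul_pone] at hyz
        cases hyz
        simp
      · simp [if_neg hz, q_mul_bot]
    · exact le_iSup_of_le x (le_iSup_of_le pone (le_iSup_of_le (mul_pone x) (by simp)))
  · -- right distributivity
    intro f s
    funext x
    simp only [conv, sSup_apply, iSup_apply]
    apply le_antisymm
    · refine iSup_le fun y => iSup_le fun z => iSup_le fun hyz => ?_
      rw [q_mul_iSup]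
      refine iSup_le fun g => ?_
      exact le_iSup_of_le g.1 (le_iSup_of_le g.2
        (le_iSup_of_le y (le_iSup_of_le z (le_iSup_of_le hyz le_rfl))))
    · refine iSup_le fun g => iSup_le fun hg => iSup_le fun y => iSup_le fun z =>
        iSup_le fun hyz => ?_
      refine le_iSup_of_le y (le_iSup_of_le z (le_iSup_of_le hyz ?_))
      refine q_mul_le_mul_left _ ?_
      exact le_iSup_of_le ⟨g, hg⟩ le_rfl
  · -- left distributivity
    intro s g
    funext x
    simp only [conv, sSup_apply, iSup_apply]
    apply le_antisymm
    · refine iSup_le fun y => iSup_le fun z => iSup_le fun hyz => ?_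
      rw [q_iSup_mul]
      refine iSup_le fun f => ?_
      exact le_iSup_of_le f.1 (le_iSup_of_le f.2
        (le_iSup_of_le y (le_iSup_of_le z (le_iSup_of_le hyz le_rfl))))
    · refine iSup_le fun f => iSup_le fun hf => iSup_le fun y => iSup_le fun z =>
        iSup_le fun hyz => ?_
      refine le_iSup_of_le y (le_iSup_of_le z (le_iSup_of_le hyz ?_))
      refine q_mul_le_mul_right ?_ _
      exact le_iSup_of_le ⟨f, hf⟩ le_rfl
end

section
/- A state transformer f : Σ → 2^Σ over states Σ = S × M with M a resource monoid is local (meaning f(s, h₁*h₂) ≤ f(s,h₁) * {(s,h₂)} whenever h₁*h₂ is defined) if and only if the associated predicate transformer [f] q = { σ ∣ f σ ⊆ q } is local, i.e., ([f] p) * q ≤ [f] (p * q) for all predicates p, q. -/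
class PartialCommMonoid (M : Type*) extends PartialMonoid M where
  pcomm : ∀ x y : M, pmul x y = pmul y x

open PartialMonoid

/-- Separating conjunction on sets of states:
`P * Q = { (s, h₁*h₂) ∣ (s,h₁) ∈ P, (s,h₂) ∈ Q, h₁*h₂ defined }`. -/
def sep {S M : Type*} [PartialCommMonoid M] (P Q : Set (S × M)) : Set (S × M) :=
  {σ | ∃ h₁ h₂, pmul h₁ h₂ = some σ.2 ∧ (σ.1, h₁) ∈ P ∧ (σ.1, h₂) ∈ Q}

/-- A state transformer `f` is local if
`f (s, h₁*h₂) ≤ f (s,h₁) * {(s,h₂)}` whenever `h₁*h₂` is defined. -/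
def LocalST {S M : Type*} [PartialCommMonoid M] (f : S × M → Set (S × M)) : Prop :=
  ∀ (s : S) (h₁ h₂ h : M), pmul h₁ h₂ = some h →
    f (s, h) ⊆ sep (f (s, h₁)) {(s, h₂)}

/-- The predicate transformer `[f] q = { σ ∣ f σ ⊆ q }` of a state transformer. -/
def boxST {S M : Type*} (f : S × M → Set (S × M)) (q : Set (S × M)) : Set (S × M) :=
  {σ | f σ ⊆ q}

/-- A state transformer is local iff its associated (box) predicate transformer is
local: `([f] p) * q ≤ [f] (p * q)` for all predicates `p, q`. -/
theorem localST_iff_local_boxST {S M : Type*} [PartialCommMonoid M]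
    (f : S × M → Set (S × M)) :
    LocalST f ↔ ∀ p q : Set (S × M), sep (boxST f p) q ⊆ boxST f (sep p q) := by
  
  constructor
  · intro hf p q σ hσ τ hτ
    obtain ⟨h₁, h₂, hmul, hb, hq⟩ := hσ
    obtain ⟨a, b, hab, ha, hb'⟩ := hf σ.1 h₁ h₂ σ.2 hmul hτ
    have hb2 : (τ.1, b) = (σ.1, h₂) := hb'
    exact ⟨a, b, hab, hb ha, by rw [hb2]; exact hq⟩
  · intro hb s h₁ h₂ h hmul τ hτ
    have : (s, h) ∈ sep (boxST f (f (s, h₁))) {(s, h₂)} :=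
      ⟨h₁, h₂, hmul, fun x hx => hx, rfl⟩
    exact hb (f (s, h₁)) {(s, h₂)} this hτ
end

section
/- The local monotone predicate transformers over the assertion quantale 𝔹^{S×M} form a distributive pre-quantale: the identity transformer is local and monotone, the constant-zero transformer is local, and locality and monotonicity are preserved by composition, arbitrary suprema and arbitrary infima. -/
open PartialMonoid

/-- A predicate transformer `F` is local if `(F p) * q ≤ F (p * q)` for all `p, q`. -/
def LocalPT {S M : Type*} [PartialCommMonoid M] (F : Set (S × M) → Set (S × M)) : Prop :=
  ∀ p q : Set (S × M), sep (F p) q ⊆ F (sep p q)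

lemma sep_mono_left {S M : Type*} [PartialCommMonoid M] {P P' Q : Set (S × M)}
    (h : P ⊆ P') : sep P Q ⊆ sep P' Q := by
  rintro σ ⟨h₁, h₂, hm, hp, hq⟩
  exact ⟨h₁, h₂, hm, h hp, hq⟩

/-- The local monotone predicate transformers over the assertion quantale
`𝔹^{S×M}` form a distributive pre-quantale: the identity is local and monotone,
the constant-zero transformer is local, and locality and monotonicity are
preserved by composition, arbitrary suprema and arbitrary infima. -/

theorem local_monotone_PT_preQuantale (S M : Type*) [PartialCommMonoid M] :
    (LocalPT (id : Set (S × M) → Set (S × M)) ∧ Monotone (id : Set (S × M) → Set (S × M))) ∧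
    LocalPT (fun _ : Set (S × M) => (∅ : Set (S × M))) ∧
    (∀ F G : Set (S × M) → Set (S × M), LocalPT F → Monotone F → LocalPT G → Monotone G →
      LocalPT (F ∘ G) ∧ Monotone (F ∘ G)) ∧
    (∀ {ι : Type*} (F : ι → Set (S × M) → Set (S × M)),
      (∀ i, LocalPT (F i)) → (∀ i, Monotone (F i)) →
      LocalPT (⨆ i, F i) ∧ Monotone (⨆ i, F i)) ∧
    (∀ {ι : Type*} (F : ι → Set (S × M) → Set (S × M)),
      (∀ i, LocalPT (F i)) → (∀ i, Monotone (F i)) →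
      LocalPT (⨅ i, F i) ∧ Monotone (⨅ i, F i)) := by
  refine ⟨⟨?_, monotone_id⟩, ?_, ?_, ?_, ?_⟩
  · intro p q σ hσ; exact hσ
  · intro p q σ ⟨h₁, h₂, hm, hp, hq⟩; exact hp.elim
  · intro F G hF mF hG mG
    refine ⟨?_, mF.comp mG⟩
    intro p q σ hσ
    exact mF (hG p q) (hF (G p) q hσ)
  · intro ι F hF mF
    constructor
    · intro p q σ hσ
      obtain ⟨h₁, h₂, hm, hp, hq⟩ := hσ
      simp only [iSup_apply, Set.iSup_eq_iUnion, Set.mem_iUnion] at hp ⊢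
      obtain ⟨i, hp⟩ := hp
      exact ⟨i, hF i p q ⟨h₁, h₂, hm, hp, hq⟩⟩
    · intro p q hpq σ hσ
      simp only [iSup_apply, Set.iSup_eq_iUnion, Set.mem_iUnion] at hσ ⊢
      obtain ⟨i, hσ⟩ := hσ
      exact ⟨i, mF i hpq hσ⟩
  · intro ι F hF mF
    constructor
    · intro p q σ hσ
      simp only [iInf_apply, Set.iInf_eq_iInter, Set.mem_iInter]
      intro i
      refine hF i p q (sep_mono_left ?_ hσ)
      intro τ hτ
      simp only [iInf_apply, Set.iInf_eq_iInter, Set.mem_iInter] at hτ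
      exact hτ i
    · intro p q hpq σ hσ
      simp only [iInf_apply, Set.iInf_eq_iInter, Set.mem_iInter] at hσ ⊢
      exact fun i => mF i hpq (hσ i)
end
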